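/- arXiv:1202.2715 — 4 statements merged into one kernel-verified Lean document; each statement's English description precedes it below -/
import Mathlib

section
/- The vertex operators Γ_+ (the homomorphism p_k ↦ p_k + f_k) and Γ_- (multiplication by Ω(p_1 f)) satisfy: Γ_±(f) and Γ_±(g) commute, and Γ_+(f)·Γ_-(g) = Ω(fg)·Γ_-(g)·Γ_+(f), where Ω(fg) is a scalar (formal series in the auxiliary variables). -/
open MvPolynomial

/-- Λ = ℂ[p_1,p_2,...]; variable `X k` is the power sum p_{k+1}. -/
abbrev SymFun : Type := MvPolynomial ℕ ℂ

/-- The vertex operator Γ_+(f): the ring homomorphism p_k ↦ p_k + f_k.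
Here `F k` is the plethystic value f_{k+1}. -/
noncomputable def GammaPlus (F : ℕ → ℂ) : SymFun →ₐ[ℂ] SymFun :=
  aeval fun k => X k + C (F k)

/-- The element Ω(p_1 g) = exp(∑_{k≥1} (g_k/k) p_k) of the completion Λ̂,
as a formal power series in the p-variables: its coefficient on the
monomial p^d is ∏_k (g_k/k)^{d_k} / d_k!.  `G k` encodes g_{k+1}. -/
noncomputable def OmegaElt (G : ℕ → ℂ) : MvPowerSeries ℕ ℂ :=
  fun d => d.prod fun k e => (G k / (k + 1)) ^ e / (e.factorial : ℂ)

/-- The extension of Γ_+(f) to power series, defined coefficientwise: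
the coefficient of p^d in Γ_+(f)(S) is
∑_e S_{d+e} ∏_k C(d_k+e_k, e_k) f_k^{e_k} (a convergent sum when it exists). -/
noncomputable def GammaPlusExt (F : ℕ → ℂ) (S : MvPowerSeries ℕ ℂ) :
    MvPowerSeries ℕ ℂ :=
  fun d => ∑' e : ℕ →₀ ℕ,
    S (d + e) * ((d + e).prod fun k m => (m.choose (e k) : ℂ) * F k ^ e k)

/-!
`Γ_+(f)` and `Γ_+(g)` are translations of the generators, so they commute, and the `Γ_-` are
multiplications in a commutative ring. For the third relation, the coefficientwise extension of
`Γ_+(f)` is additive and, by Pascal's rule, satisfies `Γ_+(f)(S p_k) = Γ_+(f)(S) (p_k + f_k)`;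
by induction on `u` it remains to treat `u = 1`. The coefficient of `p^d` in `Γ_+(f) Ω(p_1 g)` is
`Ω(p_1 g)_d` times `∑_e ∏_k (f_k g_k / k)^{e_k} / e_k!`, and this sum over finitely supported
exponents `e` is the product over `k` of the exponential series, that is `Ω(fg)`.
-/

open Finset Filter Topology Nat

section ExpSeries

variable {ι 𝕜 : Type*} [RCLike 𝕜]

theorem hasSum_finsupp_prod_of_support_subset (f : ι → ℕ → 𝕜) (hf0 : ∀ k, f k 0 = 1)
    (hf : ∀ k, Summable (f k)) (s : Finset ι) :
    HasSum (fun e : {e : ι →₀ ℕ // e.support ⊆ s} => e.1.prod f) (∏ k ∈ s, ∑' n, f k n) := by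
  classical
  induction s using Finset.cons_induction with
  | empty =>
    have hzero : ∀ e : {e : ι →₀ ℕ // e.support ⊆ ∅}, e = ⟨0, empty_subset _⟩ := fun e =>
      Subtype.ext (Finsupp.support_eq_empty.1 (subset_empty.1 e.2))
    simpa using hasSum_single (f := fun e : {e : ι →₀ ℕ // e.support ⊆ ∅} => e.1.prod f)
      ⟨0, empty_subset _⟩ fun e he => absurd (hzero e) he
  | cons a s ha ih =>
    -- Adding `single a n` to an exponent supported in `s` is a bijection onto those supported in
    -- `cons a s`, and turns the product into a product of two series.
    have hmul : HasSum (fun p : ℕ × {e : ι →₀ ℕ // e.support ⊆ s} => f a p.1 * p.2.1.prod f)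
        ((∑' n, f a n) * ∏ k ∈ s, ∑' n, f k n) := by
      refine HasSum.mul (f := f a) (g := fun e : {e : ι →₀ ℕ // e.support ⊆ s} => e.1.prod f)
        (hf a).hasSum ih ?_
      exact ((hf a).norm.mul_norm ih.summable.norm).of_norm
    let g : ℕ × {e : ι →₀ ℕ // e.support ⊆ s} → {e : ι →₀ ℕ // e.support ⊆ cons a s ha} :=
      fun p => ⟨Finsupp.single a p.1 + p.2, Finsupp.support_add.trans <| union_subset
        (Finsupp.support_single_subset.trans (by simp)) (p.2.2.trans (subset_cons ha))⟩
    have hnot : ∀ e : {e : ι →₀ ℕ // e.support ⊆ s}, e.1 a = 0 := fun e =>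
      Finsupp.notMem_support_iff.1 fun h => ha (e.2 h)
    have hg_inj : Function.Injective g := by
      rintro ⟨n, e⟩ ⟨n', e'⟩ h
      have h' := congrArg Subtype.val h
      have hn : n = n' := by simpa [g, hnot] using DFunLike.congr_fun h' a
      subst hn
      exact Prod.ext rfl (Subtype.ext (add_left_cancel h'))
    have hg_surj : ∀ E, E ∈ Set.range g := fun E =>
      ⟨(E.1 a, ⟨E.1.erase a, fun x hx => by
        rw [Finsupp.support_erase, mem_erase] at hx
        exact (mem_cons.1 (E.2 hx.2)).resolve_left hx.1⟩),
        Subtype.ext (Finsupp.single_add_erase a E.1)⟩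
    have hprod : ∀ p, (g p).1.prod f = f a p.1 * p.2.1.prod f := fun p => by
      have hdisj : Disjoint (Finsupp.single a p.1).support p.2.1.support :=
        disjoint_of_subset_left Finsupp.support_single_subset
          (disjoint_singleton_left.2 fun h => ha (p.2.2 h))
      rw [Finsupp.prod_add_index_of_disjoint hdisj, Finsupp.prod_single_index (hf0 a)]
    rw [prod_cons]
    refine (hg_inj.hasSum_iff fun E hE => absurd (hg_surj E) hE).1 ?_
    simpa only [Function.comp_def, hprod] using hmul

theorem hasSum_indicator_finsupp_prod_pow_div_factorial (a : ι → 𝕜) (s : Finset ι) :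
    HasSum ({e : ι →₀ ℕ | e.support ⊆ s}.indicator fun e => e.prod fun k n => a k ^ n / n !)
      (∏ k ∈ s, NormedSpace.exp (a k)) := by
  have hexp := fun k => NormedSpace.expSeries_div_hasSum_exp (a k)
  have h := hasSum_finsupp_prod_of_support_subset (fun k n => a k ^ n / n !) (fun k => by simp)
    (fun k => (hexp k).summable) s
  simp only [(hexp _).tsum_eq] at h
  exact hasSum_subtype_iff_indicator.1 h

theorem summable_finsupp_prod_pow_div_factorial {a : ι → ℝ} (ha : Summable a) (ha0 : 0 ≤ a) :
    Summable fun e : ι →₀ ℕ => e.prod fun k n => a k ^ n / n ! := by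
  classical
  have hnonneg : ∀ e : ι →₀ ℕ, 0 ≤ e.prod fun k n => a k ^ n / n ! := fun e =>
    prod_nonneg fun k _ => div_nonneg (pow_nonneg (ha0 k) _) (Nat.cast_nonneg _)
  refine summable_of_sum_le (c := Real.exp (∑' k, a k)) hnonneg fun E => ?_
  set s := E.sup Finsupp.support
  have hsub := hasSum_indicator_finsupp_prod_pow_div_factorial a s
  calc ∑ e ∈ E, e.prod (fun k n => a k ^ n / n !)
      = ∑ e ∈ E, {e : ι →₀ ℕ | e.support ⊆ s}.indicator
          (fun e => e.prod fun k n => a k ^ n / n !) e :=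
        sum_congr rfl fun e he => by
          rw [Set.indicator_of_mem]
          exact le_sup (f := Finsupp.support) he
    _ ≤ ∏ k ∈ s, NormedSpace.exp (a k) :=
        sum_le_hasSum E (fun e _ => Set.indicator_nonneg (fun e _ => hnonneg e) e) hsub
    _ ≤ Real.exp (∑' k, a k) := by
        rw [← Real.exp_eq_exp_ℝ, ← Real.exp_sum, Real.exp_le_exp]
        exact ha.sum_le_tsum s fun k _ => ha0 k

theorem hasSum_finsupp_prod_pow_div_factorial {a : ι → ℂ} (ha : Summable a) :
    HasSum (fun e : ι →₀ ℕ => e.prod fun k n => a k ^ n / n !) (Complex.exp (∑' k, a k)) := by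
  set W : (ι →₀ ℕ) → ℂ := fun e => e.prod fun k n => a k ^ n / (n ! : ℂ)
  have hnorm : ∀ e, ‖W e‖ = e.prod fun k n => ‖a k‖ ^ n / n ! := fun e => by
    simp [W, Finsupp.prod, norm_prod]
  have hbound := summable_finsupp_prod_pow_div_factorial ha.norm fun k => norm_nonneg (a k)
  have hW : Summable W := .of_norm (by simpa only [hnorm] using hbound)
  have hlim :
      Tendsto (fun s : Finset ι => ∏ k ∈ s, Complex.exp (a k)) atTop (𝓝 (∑' e, W e)) := by
    -- Truncating `W` to exponents supported in `s` gives the finite product `∏ k ∈ s, exp (a k)`.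
    have := tendsto_tsum_of_dominated_convergence (𝓕 := atTop)
      (f := fun s => {e : ι →₀ ℕ | e.support ⊆ s}.indicator W) hbound
      (fun e => tendsto_const_nhds.congr' <| (eventually_ge_atTop e.support).mono fun s hs =>
        (Set.indicator_of_mem hs W).symm)
      (.of_forall fun s e => (norm_indicator_le_norm_self W e).trans (hnorm e).le)
    have hsub : ∀ s : Finset ι, ∑' e, {e : ι →₀ ℕ | e.support ⊆ s}.indicator W e =
        ∏ k ∈ s, Complex.exp (a k) := fun s => by
      rw [Complex.exp_eq_exp_ℂ]
      exact (hasSum_indicator_finsupp_prod_pow_div_factorial a s).tsum_eq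
    simpa only [hsub] using this
  rw [← tendsto_nhds_unique hlim ha.hasSum.cexp]
  exact hW.hasSum

end ExpSeries

theorem gammaPlus_X (F : ℕ → ℂ) (k : ℕ) : GammaPlus F (X k) = X k + C (F k) :=
  aeval_X _ k

theorem gammaPlus_C (F : ℕ → ℂ) (c : ℂ) : GammaPlus F (C c) = C c :=
  (GammaPlus F).commutes c

theorem gammaPlus_comm (F G : ℕ → ℂ) (u : SymFun) :
    GammaPlus F (GammaPlus G u) = GammaPlus G (GammaPlus F u) := by
  suffices (GammaPlus F).comp (GammaPlus G) = (GammaPlus G).comp (GammaPlus F) from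
    DFunLike.congr_fun this u
  refine MvPolynomial.algHom_ext fun k => ?_
  simp only [AlgHom.comp_apply, gammaPlus_X, gammaPlus_C, map_add]
  ring

theorem pow_add_div_factorial_mul_choose (x y : ℂ) (a b : ℕ) :
    x ^ (a + b) / (a + b)! * ((a + b).choose b * y ^ b) = x ^ a / a ! * ((y * x) ^ b / b !) := by
  rw [← add_choose_mul_factorial_mul_factorial a b]
  push_cast
  have : ((a + b).choose b : ℂ) ≠ 0 := by exact_mod_cast (choose_pos (le_add_left b a)).ne'
  field_simp
  ring

theorem add_choose_mul_pow_pascal {a b : ℕ} (h : 1 ≤ a + b) (f : ℂ) :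
    ((a + b).choose b : ℂ) * f ^ b =
      (if 1 ≤ a then ((a - 1 + b).choose b : ℂ) * f ^ b else 0) +
        (if 1 ≤ b then f * (((a + (b - 1)).choose (b - 1) : ℂ) * f ^ (b - 1)) else 0) := by
  rcases a with _ | a <;> rcases b with _ | b
  · omega
  · simp [pow_succ]
    ring
  · simp
  · rw [show a + 1 + (b + 1) = a + b + 1 + 1 by omega, choose_succ_succ']
    simp only [le_add_iff_nonneg_left, zero_le, if_true, add_tsub_cancel_right,
      show a + (b + 1) = a + b + 1 by omega, show a + 1 + b = a + b + 1 by omega]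
    push_cast
    ring

/-- The coefficient of `p^d` in `Γ_+(f) p^(d + e)`. -/
noncomputable def shiftCoeff (F : ℕ → ℂ) (d e : ℕ →₀ ℕ) : ℂ :=
  (d + e).prod fun k m => (m.choose (e k) : ℂ) * F k ^ e k

def GammaPlusExtSummable (F : ℕ → ℂ) (S : MvPowerSeries ℕ ℂ) : Prop :=
  ∀ d, Summable fun e => MvPowerSeries.coeff (d + e) S * shiftCoeff F d e

theorem coeff_gammaPlusExt (F : ℕ → ℂ) (S : MvPowerSeries ℕ ℂ) (d : ℕ →₀ ℕ) :
    MvPowerSeries.coeff d (GammaPlusExt F S) =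
      ∑' e, MvPowerSeries.coeff (d + e) S * shiftCoeff F d e :=
  rfl

theorem shiftCoeff_eq_prod (F : ℕ → ℂ) {d e : ℕ →₀ ℕ} {s : Finset ℕ}
    (hs : (d + e).support ⊆ s) :
    shiftCoeff F d e = ∏ k ∈ s, ((d k + e k).choose (e k) : ℂ) * F k ^ e k := by
  rw [shiftCoeff, Finsupp.prod]
  refine prod_subset hs fun k _ hk => ?_
  have hk : d k + e k = 0 := Finsupp.notMem_support_iff.1 hk
  simp [Finsupp.add_apply, show e k = 0 by omega]

theorem omegaElt_add_mul_shiftCoeff (F G : ℕ → ℂ) (d e : ℕ →₀ ℕ) :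
    OmegaElt G (d + e) * shiftCoeff F d e =
      OmegaElt G d * e.prod fun k n => (F k * G k / (k + 1)) ^ n / n ! := by
  set s := (d + e).support
  have hprod : ∀ n ≤ d + e, OmegaElt G n = ∏ k ∈ s, (G k / (k + 1)) ^ n k / (n k)! :=
    fun n hn => Finsupp.prod_of_support_subset _ (Finsupp.support_mono hn) _ fun _ _ => by simp
  rw [hprod _ le_rfl, hprod d le_self_add, shiftCoeff_eq_prod F subset_rfl,
    Finsupp.prod_of_support_subset e (Finsupp.support_mono le_add_self) _ fun _ _ => by simp,
    ← prod_mul_distrib, ← prod_mul_distrib]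
  refine prod_congr rfl fun k _ => ?_
  rw [Finsupp.add_apply, mul_div_assoc, pow_add_div_factorial_mul_choose]

theorem shiftCoeff_pascal (F : ℕ → ℂ) {d e : ℕ →₀ ℕ} {k : ℕ}
    (h : Finsupp.single k 1 ≤ d + e) :
    shiftCoeff F d e =
      (if Finsupp.single k 1 ≤ d then shiftCoeff F (d - Finsupp.single k 1) e else 0) +
        (if Finsupp.single k 1 ≤ e then F k * shiftCoeff F d (e - Finsupp.single k 1)
        else 0) := by
  classical
  set s := (d + e).support
  set δ := Finsupp.single k 1
  have hk : k ∈ s := Finsupp.mem_support_iff.2 <| by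
    simp only [δ, Finsupp.single_le_iff, Finsupp.add_apply] at h ⊢
    omega
  have hsplit : ∀ d' e', d' + e' ≤ d + e → (∀ j ≠ k, d' j = d j ∧ e' j = e j) →
      shiftCoeff F d' e' = ((d' k + e' k).choose (e' k) : ℂ) * F k ^ e' k *
        ∏ j ∈ s.erase k, ((d j + e j).choose (e j) : ℂ) * F j ^ e j := by
    intro d' e' hle hagree
    rw [shiftCoeff_eq_prod F (Finsupp.support_mono hle), ← mul_prod_erase s _ hk]
    refine congrArg _ (prod_congr rfl fun j hj => ?_)
    obtain ⟨hd, he⟩ := hagree j (ne_of_mem_erase hj)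
    rw [hd, he]
  have hδ : ∀ j ≠ k, δ j = 0 := fun j hj => Finsupp.single_eq_of_ne hj
  rw [hsplit d e le_rfl fun _ _ => ⟨rfl, rfl⟩,
    hsplit (d - δ) e (add_le_add_left tsub_le_self e) fun j hj => by simp [hδ j hj],
    hsplit d (e - δ) (add_le_add_right tsub_le_self d) fun j hj => by simp [hδ j hj]]
  have hpascal := add_choose_mul_pow_pascal (a := d k) (b := e k)
    (by simpa [δ, Finsupp.single_le_iff] using h) (F k)
  simp only [δ, Finsupp.single_le_iff, Finsupp.tsub_apply, Finsupp.single_eq_same] at hpascal ⊢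
  rw [hpascal]
  split_ifs <;> ring

theorem hasSum_ite_le_tsub_iff {M ι : Type*} [AddCommMonoid M] [TopologicalSpace M]
    (δ : ι →₀ ℕ) (f : (ι →₀ ℕ) → M) (a : M) :
    HasSum (fun e => if δ ≤ e then f (e - δ) else 0) a ↔ HasSum f a := by
  rw [← (add_left_injective δ).hasSum_iff fun x hx =>
    if_neg fun h => hx ⟨x - δ, tsub_add_cancel_of_le h⟩]
  simp [Function.comp_def]

theorem gammaPlusExt_mul_C (F : ℕ → ℂ) (S : MvPowerSeries ℕ ℂ) (c : ℂ) :
    GammaPlusExt F (S * MvPowerSeries.C c) = GammaPlusExt F S * MvPowerSeries.C c := by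
  ext d
  simp only [coeff_gammaPlusExt, MvPowerSeries.coeff_mul_C, ← tsum_mul_right]
  exact tsum_congr fun e => mul_right_comm _ _ _

theorem gammaPlusExt_add {F : ℕ → ℂ} {S T : MvPowerSeries ℕ ℂ} (hS : GammaPlusExtSummable F S)
    (hT : GammaPlusExtSummable F T) :
    GammaPlusExt F (S + T) = GammaPlusExt F S + GammaPlusExt F T := by
  ext d
  simp only [coeff_gammaPlusExt, map_add, add_mul]
  exact (hS d).tsum_add (hT d)

theorem gammaPlusExt_mul_X {F : ℕ → ℂ} {S : MvPowerSeries ℕ ℂ} (k : ℕ)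
    (hS : GammaPlusExtSummable F S) :
    GammaPlusExt F (S * MvPowerSeries.X k) =
      GammaPlusExt F S * (MvPowerSeries.X k + MvPowerSeries.C (F k)) := by
  ext d
  set δ := Finsupp.single k 1
  have hterm : ∀ e, MvPowerSeries.coeff (d + e) (S * MvPowerSeries.X k) * shiftCoeff F d e =
      (if δ ≤ d then MvPowerSeries.coeff (d - δ + e) S * shiftCoeff F (d - δ) e else 0) +
        if δ ≤ e then F k * (MvPowerSeries.coeff (d + (e - δ)) S * shiftCoeff F d (e - δ))
        else 0 := fun e => by
    rw [MvPowerSeries.X_def, MvPowerSeries.coeff_mul_monomial, mul_one]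
    by_cases h : δ ≤ d + e
    · rw [if_pos h, shiftCoeff_pascal F h]
      split_ifs with hd he he
      · rw [tsub_add_eq_add_tsub hd, ← add_tsub_assoc_of_le he]
        ring
      · rw [tsub_add_eq_add_tsub hd]
        ring
      · rw [← add_tsub_assoc_of_le he]
        ring
      · ring
    · have hd : ¬ δ ≤ d := fun h' => h (h'.trans le_self_add)
      have he : ¬ δ ≤ e := fun h' => h (h'.trans le_add_self)
      rw [if_neg h, zero_mul, if_neg hd, if_neg he, add_zero]
  have hfirst : HasSum
      (fun e => if δ ≤ d then MvPowerSeries.coeff (d - δ + e) S * shiftCoeff F (d - δ) e else 0)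
      (if δ ≤ d then MvPowerSeries.coeff (d - δ) (GammaPlusExt F S) else 0) := by
    split_ifs
    exacts [(hS _).hasSum, hasSum_zero]
  have hsecond : HasSum
      (fun e => if δ ≤ e then F k * (MvPowerSeries.coeff (d + (e - δ)) S * shiftCoeff F d (e - δ))
        else 0)
      (F k * MvPowerSeries.coeff d (GammaPlusExt F S)) :=
    (hasSum_ite_le_tsub_iff δ (fun e => F k * (MvPowerSeries.coeff (d + e) S * shiftCoeff F d e))
      _).2 ((hS d).hasSum.mul_left (F k))
  rw [coeff_gammaPlusExt, tsum_congr hterm, (hfirst.add hsecond).tsum_eq, mul_add, map_add,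
    MvPowerSeries.X_def, MvPowerSeries.coeff_mul_monomial, MvPowerSeries.coeff_mul_C, mul_one,
    mul_comm (F k)]

theorem gammaPlusExt_omegaElt {F G : ℕ → ℂ} (hΩ : Summable fun k : ℕ => F k * G k / (k + 1)) :
    GammaPlusExt F (OmegaElt G) = Complex.exp (∑' k : ℕ, F k * G k / (k + 1)) • OmegaElt G := by
  ext d
  rw [coeff_gammaPlusExt, MvPowerSeries.coeff_smul, mul_comm]
  exact (tsum_congr (omegaElt_add_mul_shiftCoeff F G d)).trans
    ((hasSum_finsupp_prod_pow_div_factorial hΩ).mul_left _).tsum_eq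

theorem gammaPlusExt_omegaElt_mul {F G : ℕ → ℂ} (hΩ : Summable fun k : ℕ => F k * G k / (k + 1))
    (hsum : ∀ u : SymFun, GammaPlusExtSummable F (OmegaElt G * (u : MvPowerSeries ℕ ℂ)))
    (u : SymFun) :
    GammaPlusExt F (OmegaElt G * (u : MvPowerSeries ℕ ℂ)) =
      Complex.exp (∑' k : ℕ, F k * G k / (k + 1)) •
        (OmegaElt G * ((GammaPlus F u : SymFun) : MvPowerSeries ℕ ℂ)) := by
  induction u using MvPolynomial.induction_on with
  | C c =>
    rw [gammaPlus_C, MvPolynomial.coe_C, gammaPlusExt_mul_C, gammaPlusExt_omegaElt hΩ,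
      smul_mul_assoc]
  | add p q hp hq =>
    rw [MvPolynomial.coe_add, mul_add, gammaPlusExt_add (hsum p) (hsum q), hp, hq, map_add,
      MvPolynomial.coe_add, mul_add, smul_add]
  | mul_X p k hp =>
    rw [MvPolynomial.coe_mul, MvPolynomial.coe_X, ← mul_assoc, gammaPlusExt_mul_X k (hsum p), hp,
      map_mul, gammaPlus_X, MvPolynomial.coe_mul, MvPolynomial.coe_add, MvPolynomial.coe_X,
      MvPolynomial.coe_C, smul_mul_assoc, mul_assoc]

theorem Gamma_commutation_relations (F G : ℕ → ℂ)
    (hΩ : Summable fun k : ℕ => F k * G k / (k + 1))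
    (hsum : ∀ (u : SymFun) (d : ℕ →₀ ℕ),
      Summable fun e : ℕ →₀ ℕ =>
        (OmegaElt G * (u : MvPowerSeries ℕ ℂ)) (d + e) *
          ((d + e).prod fun k m => (m.choose (e k) : ℂ) * F k ^ e k)) :
    (∀ u : SymFun, GammaPlus F (GammaPlus G u) = GammaPlus G (GammaPlus F u)) ∧
    (∀ S : MvPowerSeries ℕ ℂ,
      OmegaElt F * (OmegaElt G * S) = OmegaElt G * (OmegaElt F * S)) ∧
    (∀ u : SymFun,
      GammaPlusExt F (OmegaElt G * (u : MvPowerSeries ℕ ℂ)) =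
        Complex.exp (∑' k : ℕ, F k * G k / (k + 1)) •
          (OmegaElt G * ((GammaPlus F u : SymFun) : MvPowerSeries ℕ ℂ))) :=
  ⟨gammaPlus_comm F G, fun S => mul_left_comm _ _ S, gammaPlusExt_omegaElt_mul hΩ hsum⟩
end

section
/- For partitions μ, ν, the Laurent polynomial E_{μ,ν} := V_∅·\bar{V}_∅·\bar{M} − V_ν·\bar{V}_μ·\bar{M}, where V_μ = M^{−1} − U_μ, M = (1−z_1)(1−z_2), U_μ = ∑_{(i,j)∈μ} z_1^j z_2^i, and \bar{f}(z_1,z_2) = f(z_1^{−1},z_2^{−1}), equals ∑_{□∈μ} z_1^{−a_μ(□)−1} z_2^{l_ν(□)} + ∑_{□∈ν} z_1^{a_ν(□)} z_2^{−l_μ(□)−1}, where for a box □ = (i,j), a_μ(□) = μ_i − j is the arm length and l_μ(□) = μ'_j − i is the leg length. -/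
/-- The conjugate partition: μ'_{j+1} = #{i < n : j < μ i}, for a partition
given by μ : ℕ → ℕ (0-based rows) supported in [0, n). -/
def conjPart (n : ℕ) (μ : ℕ → ℕ) (j : ℕ) : ℕ :=
  ((Finset.range n).filter fun i => j < μ i).card

/-- Arm length of the (0-based) box (i,j) with respect to μ (as an integer,
possibly negative): a_μ(i,j) = μ_i − j − 1 in 0-based coordinates. -/
def armZ (μ : ℕ → ℕ) (i j : ℕ) : ℤ := (μ i : ℤ) - j - 1

/-- Leg length of the (0-based) box (i,j) with respect to μ:
l_μ(i,j) = μ'_j − i − 1 in 0-based coordinates. -/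
def legZ (n : ℕ) (μ : ℕ → ℕ) (i j : ℕ) : ℤ := (conjPart n μ j : ℤ) - i - 1

/-!
Expanding the left side gives `M̄ M⁻¹ Ū_μ + U_ν - M̄ U_ν Ū_μ` with `M̄ M⁻¹ = z₁⁻¹ z₂⁻¹`.
On the right, since `ν` is a partition, `z₂ ^ ν'_j = 1 - (1 - z₂) ∑_{k : j < ν_k} z₂ ^ k`, and
likewise for `μ'`. The constant terms reproduce `z₁⁻¹ z₂⁻¹ Ū_μ` and `U_ν` after reversing each
row, and the correction terms split over pairs of rows `(i, k)`. For the pair of row lengths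
`a = μ_i`, `b = ν_k` everything reduces to the one-variable identity
`∑_{j < min a b} (z^(b-1-j) - z^(j-a)) = (1 - z^(-a)) ∑_{j < b} z^j`.
-/

open Finset

theorem Finset.filter_range_eq_range_card {p : ℕ → Prop} [DecidablePred p] (hp : Antitone p)
    (n : ℕ) : (range n).filter p = range #((range n).filter p) := by
  induction n with
  | zero => simp
  | succ n ih =>
    by_cases h : p n
    · have hall : (range (n + 1)).filter p = range (n + 1) :=
        filter_true_of_mem fun k hk => hp (Nat.lt_succ_iff.mp (mem_range.mp hk)) h
      rw [hall, card_range]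
    · rwa [range_add_one, filter_insert, if_neg h]

theorem pow_conjPart {R : Type*} [CommRing R] (w : R) {ν : ℕ → ℕ} (hν : Antitone ν) (n j : ℕ) :
    w ^ conjPart n ν j = 1 - (1 - w) * ∑ k ∈ range n with j < ν k, w ^ k := by
  have hlower : Antitone fun k => j < ν k := fun _ _ hab hb => hb.trans_le (hν hab)
  rw [filter_range_eq_range_card hlower, mul_neg_geom_sum, sub_sub_cancel, conjPart]

theorem sum_boxes_mul_pow_conjPart {R : Type*} [CommRing R] (w : R) (f : ℕ → ℕ → R)
    (μ : ℕ → ℕ) {ν : ℕ → ℕ} (hν : Antitone ν) (n : ℕ) :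
    ∑ i ∈ range n, ∑ j ∈ range (μ i), f i j * w ^ conjPart n ν j =
      ∑ i ∈ range n, ∑ j ∈ range (μ i), f i j -
        (1 - w) * ∑ i ∈ range n, ∑ k ∈ range n,
          w ^ k * ∑ j ∈ range (min (μ i) (ν k)), f i j := by
  have hswap : ∀ i, ∑ j ∈ range (μ i), f i j * ∑ k ∈ range n with j < ν k, w ^ k =
      ∑ k ∈ range n, w ^ k * ∑ j ∈ range (min (μ i) (ν k)), f i j := fun i => by
    simp only [mul_sum]
    rw [sum_comm' (t' := range n) (s' := fun k => range (min (μ i) (ν k)))]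
    · exact sum_congr rfl fun _ _ => sum_congr rfl fun _ _ => mul_comm _ _
    · intro j k
      simp only [mem_range, mem_filter]
      omega
  simp only [pow_conjPart w hν, mul_sub, mul_one, sum_sub_distrib, mul_left_comm _ (1 - w),
    ← mul_sum, hswap]

section Field

variable {K : Type*} [Field K]

theorem sum_range_zpow_natCast_add {x : K} (hx : x ≠ 0) (c : ℤ) (m : ℕ) :
    ∑ j ∈ range m, x ^ ((j : ℤ) + c) = x ^ c * ∑ j ∈ range m, x ^ j := by
  rw [mul_sum]
  exact sum_congr rfl fun j _ => by rw [zpow_add₀ hx, zpow_natCast, mul_comm]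

theorem sum_range_zpow_sub_natCast_sub_one {x : K} (hx : x ≠ 0) (c : ℤ) (m : ℕ) :
    ∑ j ∈ range m, x ^ (c - j - 1) = x ^ (c - m) * ∑ j ∈ range m, x ^ j := by
  rw [← sum_range_reflect, mul_sum]
  refine sum_congr rfl fun j hj => ?_
  have := mem_range.mp hj
  rw [← zpow_natCast, ← zpow_add₀ hx]
  congr 1
  omega

theorem sum_range_zpow_sub_sub_sum_range_zpow_sub {x : K} (hx : x ≠ 0) (a b : ℕ) :
    ∑ j ∈ range (min a b), x ^ ((b : ℤ) - j - 1) - ∑ j ∈ range (min a b), x ^ ((j : ℤ) - a) =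
      (1 - x⁻¹ ^ a) * ∑ j ∈ range b, x ^ j := by
  simp only [sub_eq_add_neg (_ : ℤ) (a : ℤ), sum_range_zpow_natCast_add hx,
    sum_range_zpow_sub_natCast_sub_one hx, zpow_neg, zpow_natCast, inv_pow, ← sub_mul]
  rcases le_total b a with hba | hab
  · rw [min_eq_right hba, sub_self, zpow_zero]
  · obtain ⟨c, rfl⟩ := Nat.exists_eq_add_of_le hab
    rw [min_eq_left hab, Nat.cast_add, add_sub_cancel_left, zpow_natCast, sum_range_add]
    simp only [pow_add, ← mul_sum]
    have hxa : x⁻¹ ^ a * x ^ a = 1 := by rw [← mul_pow, inv_mul_cancel₀ hx, one_pow]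
    linear_combination (∑ j ∈ range c, x ^ j) * hxa +
      (∑ j ∈ range a, x ^ j) * mul_neg_geom_sum x c - (∑ j ∈ range c, x ^ j) * mul_neg_geom_sum x a

theorem sum_range_zpow_natCast_sub_self {x : K} (hx : x ≠ 0) (a : ℕ) :
    ∑ j ∈ range a, x ^ ((j : ℤ) - a) = x⁻¹ * ∑ j ∈ range a, x⁻¹ ^ j := by
  calc ∑ j ∈ range a, x ^ ((j : ℤ) - a) = x ^ (-(a : ℤ)) * ∑ j ∈ range a, x ^ j := by
        simp only [sub_eq_add_neg, sum_range_zpow_natCast_add hx]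
    _ = ∑ j ∈ range a, x ^ ((0 : ℤ) - j - 1) := by
        rw [sum_range_zpow_sub_natCast_sub_one hx, zero_sub]
    _ = x⁻¹ * ∑ j ∈ range a, x⁻¹ ^ j := by
        rw [mul_sum]
        refine sum_congr rfl fun j _ => ?_
        rw [show (0 : ℤ) - j - 1 = -((j + 1 : ℕ) : ℤ) by push_cast; ring, zpow_neg,
          zpow_natCast, ← inv_pow, pow_succ']

theorem sum_boxes_zpow_neg_armZ_mul_zpow_legZ {x y : K} (hx : x ≠ 0) (hy : y ≠ 0)
    (μ : ℕ → ℕ) {ν : ℕ → ℕ} (hν : Antitone ν) (n : ℕ) :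
    ∑ i ∈ range n, ∑ j ∈ range (μ i), x ^ (-(armZ μ i j) - 1) * y ^ (legZ n ν i j) =
      x⁻¹ * y⁻¹ * ∑ i ∈ range n, ∑ j ∈ range (μ i), x⁻¹ ^ j * y⁻¹ ^ i +
        (1 - y⁻¹) * ∑ i ∈ range n, ∑ k ∈ range n,
          y ^ k * y⁻¹ ^ i * ∑ j ∈ range (min (μ i) (ν k)), x ^ ((j : ℤ) - μ i) := by
  have hbox : ∀ i j, x ^ (-(armZ μ i j) - 1) * y ^ (legZ n ν i j) =
      x ^ ((j : ℤ) - μ i) * y⁻¹ ^ (i + 1) * y ^ conjPart n ν j := fun i j => by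
    rw [armZ, legZ, show -((μ i : ℤ) - j - 1) - 1 = (j : ℤ) - μ i by ring,
      show (conjPart n ν j : ℤ) - i - 1 = (conjPart n ν j : ℤ) - (i + 1 : ℕ) by push_cast; ring,
      zpow_sub₀ hy, zpow_natCast, zpow_natCast, div_eq_mul_inv, ← inv_pow]
    ring
  simp only [hbox, sum_boxes_mul_pow_conjPart y _ μ hν n, ← sum_mul, sum_range_zpow_natCast_sub_self hx]
  have hmain : ∑ i ∈ range n, (x⁻¹ * ∑ j ∈ range (μ i), x⁻¹ ^ j) * y⁻¹ ^ (i + 1) =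
      x⁻¹ * y⁻¹ * ∑ i ∈ range n, (∑ j ∈ range (μ i), x⁻¹ ^ j) * y⁻¹ ^ i := by
    rw [mul_sum]
    exact sum_congr rfl fun i _ => by ring
  have hcross : (1 - y) * ∑ i ∈ range n, ∑ k ∈ range n,
        y ^ k * ((∑ j ∈ range (min (μ i) (ν k)), x ^ ((j : ℤ) - μ i)) * y⁻¹ ^ (i + 1)) =
      -((1 - y⁻¹) * ∑ i ∈ range n, ∑ k ∈ range n,
        y ^ k * y⁻¹ ^ i * ∑ j ∈ range (min (μ i) (ν k)), x ^ ((j : ℤ) - μ i)) := by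
    rw [mul_sum, mul_sum, ← sum_neg_distrib]
    refine sum_congr rfl fun i _ => ?_
    rw [mul_sum, mul_sum, ← sum_neg_distrib]
    refine sum_congr rfl fun k _ => ?_
    linear_combination -(y ^ k * y⁻¹ ^ i *
      ∑ j ∈ range (min (μ i) (ν k)), x ^ ((j : ℤ) - μ i)) * mul_inv_cancel₀ hy
  rw [hmain, hcross, sub_neg_eq_add]

theorem sum_boxes_zpow_armZ_mul_zpow_neg_legZ {x y : K} (hx : x ≠ 0) (hy : y ≠ 0)
    {μ : ℕ → ℕ} (hμ : Antitone μ) (ν : ℕ → ℕ) (n : ℕ) :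
    ∑ i ∈ range n, ∑ j ∈ range (ν i), x ^ (armZ ν i j) * y ^ (-(legZ n μ i j) - 1) =
      ∑ i ∈ range n, ∑ j ∈ range (ν i), x ^ j * y ^ i -
        (1 - y⁻¹) * ∑ i ∈ range n, ∑ k ∈ range n,
          y ^ k * y⁻¹ ^ i * ∑ j ∈ range (min (μ i) (ν k)), x ^ ((ν k : ℤ) - j - 1) := by
  have hbox : ∀ i j, x ^ (armZ ν i j) * y ^ (-(legZ n μ i j) - 1) =
      x ^ ((ν i : ℤ) - j - 1) * y ^ i * y⁻¹ ^ conjPart n μ j := fun i j => by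
    rw [armZ, legZ, show -((conjPart n μ j : ℤ) - i - 1) - 1 = (i : ℤ) - conjPart n μ j by ring,
      zpow_sub₀ hy, zpow_natCast, zpow_natCast, div_eq_mul_inv, ← inv_pow]
    ring
  have hrow : ∀ b : ℕ, ∑ j ∈ range b, x ^ ((b : ℤ) - j - 1) = ∑ j ∈ range b, x ^ j := by
    intro b
    rw [sum_range_zpow_sub_natCast_sub_one hx, sub_self, zpow_zero, one_mul]
  simp only [hbox, sum_boxes_mul_pow_conjPart y⁻¹ _ ν hμ n, ← sum_mul, hrow]
  rw [sum_comm]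
  congr 2
  refine sum_congr rfl fun i _ => sum_congr rfl fun k _ => ?_
  rw [min_comm]
  ring

theorem one_sub_inv_mul_one_sub_inv_mul_sum_boxes (x y : K) (μ ν : ℕ → ℕ) (n : ℕ) :
    (1 - x⁻¹) * (1 - y⁻¹) * ((∑ i ∈ range n, ∑ j ∈ range (ν i), x ^ j * y ^ i) *
        ∑ i ∈ range n, ∑ j ∈ range (μ i), x⁻¹ ^ j * y⁻¹ ^ i) =
      (1 - y⁻¹) * ∑ i ∈ range n, ∑ k ∈ range n,
        y ^ k * y⁻¹ ^ i * ((1 - x⁻¹ ^ μ i) * ∑ j ∈ range (ν k), x ^ j) := by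
  simp only [← sum_mul]
  rw [sum_mul_sum, sum_comm, mul_sum, mul_sum]
  refine sum_congr rfl fun i _ => ?_
  rw [mul_sum, mul_sum]
  refine sum_congr rfl fun k _ => ?_
  rw [← mul_neg_geom_sum]
  ring

theorem one_sub_inv_mul_sub_mul_inv_sub {x y : K} (hx : x ≠ 0) (hy : y ≠ 0)
    (hx1 : 1 - x ≠ 0) (hy1 : 1 - y ≠ 0) (B C : K) :
    ((1 - x⁻¹) * (1 - y⁻¹)) *
        (((1 - x) * (1 - y))⁻¹ * ((1 - x⁻¹) * (1 - y⁻¹))⁻¹ -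
          (((1 - x) * (1 - y))⁻¹ - B) * (((1 - x⁻¹) * (1 - y⁻¹))⁻¹ - C)) =
      x⁻¹ * y⁻¹ * C + B - (1 - x⁻¹) * (1 - y⁻¹) * (B * C) := by
  have hconj : (1 - x⁻¹) * (1 - y⁻¹) = x⁻¹ * y⁻¹ * ((1 - x) * (1 - y)) := by
    field_simp
    ring
  rw [hconj]
  field_simp
  ring

end Field

theorem arm_leg_formula_general {K : Type*} [Field K] (z1 z2 : K)
    (hz1 : z1 ≠ 0) (hz2 : z2 ≠ 0) (h1 : 1 - z1 ≠ 0) (h2 : 1 - z2 ≠ 0)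
    (μ ν : ℕ → ℕ) (hμ : Antitone μ) (hν : Antitone ν) (n : ℕ) :
    ((1 - z1⁻¹) * (1 - z2⁻¹)) *
        (((1 - z1) * (1 - z2))⁻¹ * ((1 - z1⁻¹) * (1 - z2⁻¹))⁻¹ -
          (((1 - z1) * (1 - z2))⁻¹ -
              ∑ i ∈ Finset.range n, ∑ j ∈ Finset.range (ν i), z1 ^ j * z2 ^ i) *
            (((1 - z1⁻¹) * (1 - z2⁻¹))⁻¹ -
              ∑ i ∈ Finset.range n, ∑ j ∈ Finset.range (μ i), z1⁻¹ ^ j * z2⁻¹ ^ i)) =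
      (∑ i ∈ Finset.range n, ∑ j ∈ Finset.range (μ i),
          z1 ^ (-(armZ μ i j) - 1) * z2 ^ (legZ n ν i j)) +
        ∑ i ∈ Finset.range n, ∑ j ∈ Finset.range (ν i),
          z1 ^ (armZ ν i j) * z2 ^ (-(legZ n μ i j) - 1) := by
  rw [one_sub_inv_mul_sub_mul_inv_sub hz1 hz2 h1 h2, one_sub_inv_mul_one_sub_inv_mul_sum_boxes,
    sum_boxes_zpow_neg_armZ_mul_zpow_legZ hz1 hz2 μ hν,
    sum_boxes_zpow_armZ_mul_zpow_neg_legZ hz1 hz2 hμ ν]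
  have hcross : ∑ i ∈ range n, ∑ k ∈ range n, z2 ^ k * z2⁻¹ ^ i *
        ∑ j ∈ range (min (μ i) (ν k)), z1 ^ ((ν k : ℤ) - j - 1) -
      ∑ i ∈ range n, ∑ k ∈ range n, z2 ^ k * z2⁻¹ ^ i *
        ∑ j ∈ range (min (μ i) (ν k)), z1 ^ ((j : ℤ) - μ i) =
      ∑ i ∈ range n, ∑ k ∈ range n, z2 ^ k * z2⁻¹ ^ i *
        ((1 - z1⁻¹ ^ μ i) * ∑ j ∈ range (ν k), z1 ^ j) := by
    simp only [← sum_sub_distrib, ← mul_sub, sum_range_zpow_sub_sub_sum_range_zpow_sub hz1]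
  linear_combination (1 - z2⁻¹) * hcross

theorem arm_leg_formula {K : Type*} [Field K] (z1 z2 : K)
    (hz1 : z1 ≠ 0) (hz2 : z2 ≠ 0) (h1 : 1 - z1 ≠ 0) (h2 : 1 - z2 ≠ 0)
    (μ ν : ℕ → ℕ) (hμ : Antitone μ) (hν : Antitone ν) (n : ℕ)
    (hμn : ∀ i, n ≤ i → μ i = 0) (hνn : ∀ i, n ≤ i → ν i = 0) :
    ((1 - z1⁻¹) * (1 - z2⁻¹)) *
        (((1 - z1) * (1 - z2))⁻¹ * ((1 - z1⁻¹) * (1 - z2⁻¹))⁻¹ -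
          (((1 - z1) * (1 - z2))⁻¹ -
              ∑ i ∈ Finset.range n, ∑ j ∈ Finset.range (ν i), z1 ^ j * z2 ^ i) *
            (((1 - z1⁻¹) * (1 - z2⁻¹))⁻¹ -
              ∑ i ∈ Finset.range n, ∑ j ∈ Finset.range (μ i), z1⁻¹ ^ j * z2⁻¹ ^ i)) =
      (∑ i ∈ Finset.range n, ∑ j ∈ Finset.range (μ i),
          z1 ^ (-(armZ μ i j) - 1) * z2 ^ (legZ n ν i j)) +
        ∑ i ∈ Finset.range n, ∑ j ∈ Finset.range (ν i),
          z1 ^ (armZ ν i j) * z2 ^ (-(legZ n μ i j) - 1) :=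
  arm_leg_formula_general z1 z2 hz1 hz2 h1 h2 μ ν hμ hν n
end

section
/- For partitions μ, ν, the expression E_{μ,ν} = \bar{M}(V_∅\bar{V}_∅ − V_ν\bar{V}_μ), where V_μ = M^{−1} − U_μ, is a Laurent polynomial in z_1, z_2 with nonnegative integer coefficients, and when μ = ν the sum of its coefficients equals 2|μ|. -/
/-- The field ℚ(z₁,z₂) of rational functions in two variables. -/
abbrev RatField : Type := FractionRing (MvPolynomial (Fin 2) ℚ)

noncomputable def zvar (i : Fin 2) : RatField :=
  algebraMap (MvPolynomial (Fin 2) ℚ) RatField (MvPolynomial.X i)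

/-- U_μ = ∑_{(i,j)∈μ} z₁^j z₂^i (0-based boxes), for μ supported in [0,n). -/
noncomputable def Upoly (n : ℕ) (μ : ℕ → ℕ) (z1 z2 : RatField) : RatField :=
  ∑ i ∈ Finset.range n, ∑ j ∈ Finset.range (μ i), z1 ^ j * z2 ^ i

/-- E_{μ,ν} = M̄ (V_∅ V̄_∅ − V_ν V̄_μ), with M = (1−z₁)(1−z₂), V_μ = M⁻¹ − U_μ. -/
noncomputable def Etang (n : ℕ) (μ ν : ℕ → ℕ) : RatField :=
  let z1 := zvar 0; let z2 := zvar 1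
  let M := (1 - z1) * (1 - z2)
  let Mb := (1 - z1⁻¹) * (1 - z2⁻¹)
  Mb * (M⁻¹ * Mb⁻¹ - (M⁻¹ - Upoly n ν z1 z2) * (Mb⁻¹ - Upoly n μ z1⁻¹ z2⁻¹))

namespace EtangProof
open Finset

noncomputable def X : RatField := zvar 0
noncomputable def Y : RatField := zvar 1

lemma zvar_ne_zero (i : Fin 2) : zvar i ≠ 0 := by
  rw [zvar]
  intro h
  rw [IsFractionRing.to_map_eq_zero_iff] at h
  exact MvPolynomial.X_ne_zero i h

lemma one_sub_zvar_ne_zero (i : Fin 2) : (1 : RatField) - zvar i ≠ 0 := by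
  have : (1 : RatField) - zvar i
      = algebraMap (MvPolynomial (Fin 2) ℚ) RatField (1 - MvPolynomial.X i) := by
    simp [zvar, map_sub, map_one]
  rw [this]
  intro h
  rw [IsFractionRing.to_map_eq_zero_iff] at h
  have := congrArg MvPolynomial.constantCoeff h
  simp at this

lemma hX : X ≠ 0 := zvar_ne_zero 0
lemma hY : Y ≠ 0 := zvar_ne_zero 1
lemma h1X : (1 : RatField) - X ≠ 0 := one_sub_zvar_ne_zero 0
lemma h1Y : (1 : RatField) - Y ≠ 0 := one_sub_zvar_ne_zero 1

noncomputable def w (a b : ℤ) : RatField := X ^ a * Y ^ b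

lemma w_mul (a b c d : ℤ) : w a b * w c d = w (a + c) (b + d) := by
  rw [w, w, w, zpow_add₀ hX, zpow_add₀ hY]; ring

lemma w_zero : w 0 0 = 1 := by simp [w]

end EtangProof

namespace EtangProof
open Finset

/-- conjugate partition entry: number of rows (below n) with entry > c -/
def conj (n : ℕ) (μ : ℕ → ℕ) (c : ℕ) : ℕ := ((range n).filter fun i => c < μ i).card

lemma lower_set_eq_range {S : Finset ℕ} (h : ∀ ⦃i j : ℕ⦄, i ≤ j → j ∈ S → i ∈ S) :
    S = range S.card := by
  have hsub : range S.card ⊆ S := by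
    intro i hi
    rw [mem_range] at hi
    by_contra hmem
    have hS : S ⊆ range i := by
      intro j hj
      rw [mem_range]
      by_contra hij
      push_neg at hij
      exact hmem (h hij hj)
    have := card_le_card hS
    rw [card_range] at this
    omega
  exact (eq_of_subset_of_card_le hsub (by rw [card_range])).symm

lemma filter_conj {n : ℕ} {μ : ℕ → ℕ} (hμ : Antitone μ) (c : ℕ) :
    (range n).filter (fun i => c < μ i) = range (conj n μ c) := by
  rw [conj]
  apply lower_set_eq_range
  intro i j hij hj
  rw [mem_filter, mem_range] at hj ⊢
  exact ⟨lt_of_le_of_lt hij hj.1, lt_of_lt_of_le hj.2 (hμ hij)⟩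

lemma conj_le (n : ℕ) (μ : ℕ → ℕ) (c : ℕ) : conj n μ c ≤ n := by
  rw [conj]
  calc ((range n).filter fun i => c < μ i).card ≤ (range n).card := card_filter_le _ _
  _ = n := card_range n

lemma lt_conj_iff {n : ℕ} {μ : ℕ → ℕ} (hμ : Antitone μ) {c i : ℕ} (hi : i < n) :
    i < conj n μ c ↔ c < μ i := by
  constructor
  · intro h
    have : i ∈ range (conj n μ c) := mem_range.2 h
    rw [← filter_conj hμ, mem_filter] at this
    exact this.2
  · intro h
    have : i ∈ (range n).filter (fun i => c < μ i) := mem_filter.2 ⟨mem_range.2 hi, h⟩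
    rw [filter_conj hμ, mem_range] at this
    exact this

lemma conj_anti {n : ℕ} {μ : ℕ → ℕ} {c c' : ℕ} (h : c ≤ c') : conj n μ c' ≤ conj n μ c := by
  apply card_le_card
  intro i hi
  rw [mem_filter] at hi ⊢
  exact ⟨hi.1, by omega⟩

/-- telescoping over Ico -/
lemma tele (g : ℕ → RatField) {a b : ℕ} (h : a ≤ b) :
    ∑ i ∈ Ico a b, (g i - g (i + 1)) = g a - g b := by
  rw [Finset.sum_Ico_eq_sum_range]
  have : ∀ i, g (a + i) - g (a + i + 1) = (fun k => g (a + k)) i - (fun k => g (a + k)) (i + 1) := by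
    intro i; simp [Nat.add_assoc]
  simp only [this]
  rw [Finset.sum_range_sub' (fun k => g (a + k)) (b - a)]
  congr 2 <;> omega

end EtangProof
namespace EtangProof
open Finset

noncomputable def Ubar (n : ℕ) (μ : ℕ → ℕ) : RatField :=
  ∑ i ∈ range n, ∑ j ∈ range (μ i), w (-(j:ℤ)) (-(i:ℤ))

noncomputable def Uf (n : ℕ) (ν : ℕ → ℕ) : RatField :=
  ∑ i ∈ range n, ∑ j ∈ range (ν i), w (j:ℤ) (i:ℤ)

noncomputable def Mbar : RatField := (1 - X⁻¹) * (1 - Y⁻¹)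

lemma Xinv : X⁻¹ = w (-1) 0 := by simp [w, zpow_neg]
lemma Yinv : Y⁻¹ = w 0 (-1) := by simp [w, zpow_neg]

/-- geometric telescope in x -/
lemma geomX (a : ℕ) :
    (1 - X⁻¹) * ∑ j ∈ range a, w (-(j:ℤ)) 0 = 1 - w (-(a:ℤ)) 0 := by
  have h : ∀ j : ℕ, (1 - X⁻¹) * w (-(j:ℤ)) 0
      = (fun k : ℕ => w (-(k:ℤ)) 0) j - (fun k : ℕ => w (-(k:ℤ)) 0) (j + 1) := by
    intro j
    simp only []
    rw [sub_mul, one_mul, Xinv, w_mul]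
    congr 2
    push_cast; ring
  rw [Finset.mul_sum]
  simp only [h]
  rw [Finset.sum_range_sub' (fun k : ℕ => w (-(k:ℤ)) 0) a]
  simp [w_zero]

/-- L1 : M̄ Ūμ expansion -/
lemma L1 (n : ℕ) (μ : ℕ → ℕ) :
    Mbar * Ubar n μ
      = (1 - w 0 (-(n:ℤ)))
        - ∑ i ∈ range n, (w 0 (-(i:ℤ)) - w 0 (-(i:ℤ) - 1)) * w (-(μ i : ℤ)) 0 := by
  have hrow : ∀ i : ℕ, Mbar * ∑ j ∈ range (μ i), w (-(j:ℤ)) (-(i:ℤ))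
      = (w 0 (-(i:ℤ)) - w 0 (-(i:ℤ) - 1)) * (1 - w (-(μ i : ℤ)) 0) := by
    intro i
    have hsplit : ∀ j : ℕ, w (-(j:ℤ)) (-(i:ℤ)) = w (-(j:ℤ)) 0 * w 0 (-(i:ℤ)) := by
      intro j; rw [w_mul]; congr 1 <;> ring
    simp only [hsplit]
    rw [← Finset.sum_mul, Mbar]
    have : (1 - X⁻¹) * (1 - Y⁻¹) * ((∑ j ∈ range (μ i), w (-(j:ℤ)) 0) * w 0 (-(i:ℤ)))
        = ((1 - X⁻¹) * ∑ j ∈ range (μ i), w (-(j:ℤ)) 0) * ((1 - Y⁻¹) * w 0 (-(i:ℤ))) := by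
      ring
    rw [this, geomX]
    have : (1 - Y⁻¹) * w 0 (-(i:ℤ)) = w 0 (-(i:ℤ)) - w 0 (-(i:ℤ) - 1) := by
      rw [sub_mul, one_mul, Yinv, w_mul]
      congr 2
      ring
    rw [this]
    ring
  rw [Ubar, Finset.mul_sum]
  simp only [hrow]
  have htel : ∑ i ∈ range n, (w 0 (-(i:ℤ)) - w 0 (-(i:ℤ) - 1)) = 1 - w 0 (-(n:ℤ)) := by
    have h : ∀ i : ℕ, w 0 (-(i:ℤ)) - w 0 (-(i:ℤ) - 1)
        = (fun k : ℕ => w 0 (-(k:ℤ))) i - (fun k : ℕ => w 0 (-(k:ℤ))) (i + 1) := by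
      intro i; simp only []; congr 2; push_cast; ring
    simp only [h]
    rw [Finset.sum_range_sub' (fun k : ℕ => w 0 (-(k:ℤ))) n]
    simp [w_zero]
  calc ∑ i ∈ range n, (w 0 (-(i:ℤ)) - w 0 (-(i:ℤ) - 1)) * (1 - w (-(μ i : ℤ)) 0)
      = ∑ i ∈ range n, ((w 0 (-(i:ℤ)) - w 0 (-(i:ℤ) - 1))
          - (w 0 (-(i:ℤ)) - w 0 (-(i:ℤ) - 1)) * w (-(μ i : ℤ)) 0) := by
        apply Finset.sum_congr rfl; intro i _; ring
    _ = (1 - w 0 (-(n:ℤ))) - ∑ i ∈ range n, (w 0 (-(i:ℤ)) - w 0 (-(i:ℤ) - 1)) * w (-(μ i:ℤ)) 0 := by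
        rw [Finset.sum_sub_distrib, htel]

end EtangProof
namespace EtangProof
open Finset

/-- L2: the boundary sum can be re-expanded at any column c. -/
lemma L2 {n : ℕ} {μ : ℕ → ℕ} (hμ : Antitone μ) (c : ℕ) :
    w 0 (-(n:ℤ)) + ∑ i ∈ range n, (w 0 (-(i:ℤ)) - w 0 (-(i:ℤ) - 1)) * w (-(μ i : ℤ)) 0
      = w (-(c:ℤ)) (-(conj n μ c : ℤ))
        + ∑ j ∈ range c, (w (-(j:ℤ)) 0 - w (-(j:ℤ) - 1) 0) * w 0 (-(conj n μ j : ℤ))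
        + ∑ i ∈ range (conj n μ c), w (-(μ i : ℤ)) 0 * (w 0 (-(i:ℤ)) - w 0 (-(i:ℤ) - 1)) := by
  induction c with
  | zero =>
    have h0 : conj n μ 0 ≤ n := conj_le n μ 0
    rw [← Finset.sum_range_add_sum_Ico _ h0]
    have hIco : ∑ i ∈ Ico (conj n μ 0) n, (w 0 (-(i:ℤ)) - w 0 (-(i:ℤ) - 1)) * w (-(μ i : ℤ)) 0
        = w 0 (-(conj n μ 0 : ℤ)) - w 0 (-(n:ℤ)) := by
      have hz : ∀ i ∈ Ico (conj n μ 0) n,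
          (w 0 (-(i:ℤ)) - w 0 (-(i:ℤ) - 1)) * w (-(μ i : ℤ)) 0
          = (fun k : ℕ => w 0 (-(k:ℤ))) i - (fun k : ℕ => w 0 (-(k:ℤ))) (i + 1) := by
        intro i hi
        rw [mem_Ico] at hi
        have hμi : μ i = 0 := by
          by_contra hne
          have : i < conj n μ 0 := (lt_conj_iff hμ hi.2).2 (by omega)
          omega
        rw [hμi]
        simp only [Nat.cast_zero, neg_zero, w_zero, mul_one]
        congr 2
        push_cast; ring
      rw [Finset.sum_congr rfl hz, tele _ h0]
    rw [hIco]
    simp only [range_zero, sum_empty, Nat.cast_zero, neg_zero, add_zero]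
    have hcomm : ∑ i ∈ range (conj n μ 0), (w 0 (-(i:ℤ)) - w 0 (-(i:ℤ) - 1)) * w (-(μ i : ℤ)) 0
        = ∑ i ∈ range (conj n μ 0), w (-(μ i : ℤ)) 0 * (w 0 (-(i:ℤ)) - w 0 (-(i:ℤ) - 1)) := by
      apply Finset.sum_congr rfl; intro i _; ring
    rw [hcomm]
    ring
  | succ c ih =>
    rw [ih]
    have hcc : conj n μ (c + 1) ≤ conj n μ c := conj_anti (by omega)
    -- split third sum
    rw [← Finset.sum_range_add_sum_Ico
      (fun i => w (-(μ i : ℤ)) 0 * (w 0 (-(i:ℤ)) - w 0 (-(i:ℤ) - 1))) hcc]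
    have hIco : ∑ i ∈ Ico (conj n μ (c+1)) (conj n μ c),
        w (-(μ i : ℤ)) 0 * (w 0 (-(i:ℤ)) - w 0 (-(i:ℤ) - 1))
        = w (-(c:ℤ) - 1) 0 * (w 0 (-(conj n μ (c+1) : ℤ)) - w 0 (-(conj n μ c : ℤ))) := by
      have hz : ∀ i ∈ Ico (conj n μ (c+1)) (conj n μ c),
          w (-(μ i : ℤ)) 0 * (w 0 (-(i:ℤ)) - w 0 (-(i:ℤ) - 1))
          = w (-(c:ℤ) - 1) 0 * ((fun k : ℕ => w 0 (-(k:ℤ))) i - (fun k : ℕ => w 0 (-(k:ℤ))) (i+1)) := by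
        intro i hi
        rw [mem_Ico] at hi
        have hin : i < n := lt_of_lt_of_le hi.2 (conj_le n μ c)
        have h1 : c < μ i := (lt_conj_iff hμ hin).1 hi.2
        have h2 : ¬ (c + 1 < μ i) := fun hcon => by
          have := (lt_conj_iff hμ hin).2 hcon; omega
        have hμi : μ i = c + 1 := by omega
        rw [hμi]
        simp only []
        congr 2
        · push_cast; ring
        · congr 1; push_cast; ring
      rw [Finset.sum_congr rfl hz, ← Finset.mul_sum, tele _ hcc]
    rw [hIco, Finset.sum_range_succ]
    -- now pure algebra with w identities
    have e1 : w (-(c:ℤ)) (-(conj n μ c : ℤ))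
        = w (-(c:ℤ)) 0 * w 0 (-(conj n μ c : ℤ)) := by rw [w_mul]; norm_num
    have e2 : w (-((c:ℕ)+1:ℕ):ℤ) (-(conj n μ (c+1) : ℤ))
        = w (-(c:ℤ) - 1) 0 * w 0 (-(conj n μ (c+1) : ℤ)) := by
      rw [w_mul]; congr 1 <;> push_cast <;> ring
    have e3 : (w (-(c:ℤ)) 0 - w (-(c:ℤ) - 1) 0) * w 0 (-(conj n μ c : ℤ))
        = w (-(c:ℤ)) 0 * w 0 (-(conj n μ c : ℤ)) - w (-(c:ℤ) - 1) 0 * w 0 (-(conj n μ c:ℤ)) := by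
      ring
    rw [e2]
    rw [e1]
    ring
  
end EtangProof
namespace EtangProof
open Finset

lemma w_congr {a b a' b' : ℤ} (h1 : a = a') (h2 : b = b') : w a b = w a' b' := by rw [h1, h2]

lemma wmul3 (a b p q : ℤ) : w a b * (w p 0 * w 0 q) = w (a + p) (b + q) := by
  rw [w_mul, w_mul]
  exact w_congr (by ring) (by ring)

set_option maxHeartbeats 2000000 in
lemma key : ∀ (N n : ℕ) (μ ν : ℕ → ℕ), Antitone μ → Antitone ν →
    (∀ i, n ≤ i → ν i = 0) → (∑ i ∈ range n, ν i) = N →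
    X⁻¹ * Y⁻¹ * Ubar n μ + Uf n ν - Mbar * Uf n ν * Ubar n μ
      = (∑ i ∈ range n, ∑ j ∈ range (ν i), w ((ν i : ℤ) - j - 1) ((i:ℤ) - (conj n μ j : ℤ)))
        + (∑ i ∈ range n, ∑ j ∈ range (μ i), w ((j:ℤ) - (μ i : ℤ)) ((conj n ν j : ℤ) - i - 1)) := by
  intro N
  induction N with
  | zero =>
    intro n μ ν hμ hν hνn hsum
    have hν0 : ∀ i, ν i = 0 := by
      intro i
      by_cases hin : i < n
      · exact Finset.sum_eq_zero_iff.1 hsum i (mem_range.2 hin)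
      · exact hνn i (by omega)
    have hUf : Uf n ν = 0 := by
      rw [Uf]
      apply Finset.sum_eq_zero
      intro i _
      rw [hν0 i]
      simp
    have hconj : ∀ j, conj n ν j = 0 := by
      intro j
      rw [conj, Finset.card_eq_zero, Finset.filter_eq_empty_iff]
      intro i _
      rw [hν0 i]
      omega
    rw [hUf]
    have h1 : ∀ i : ℕ, ∑ j ∈ range (ν i), w ((ν i : ℤ) - j - 1) ((i:ℤ) - (conj n μ j : ℤ)) = 0 := by
      intro i; rw [hν0 i]; simp
    simp only [h1, Finset.sum_const_zero, mul_zero, zero_mul, add_zero, sub_zero, zero_add]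
    rw [Ubar, Finset.mul_sum]
    apply Finset.sum_congr rfl
    intro i _
    rw [Finset.mul_sum]
    rw [← Finset.sum_range_reflect (fun j => w ((j:ℤ) - (μ i : ℤ)) ((conj n ν j : ℤ) - i - 1)) (μ i)]
    apply Finset.sum_congr rfl
    intro j hj
    rw [mem_range] at hj
    have hXY : X⁻¹ * Y⁻¹ = w (-1) (-1) := by rw [Xinv, Yinv, w_mul]; norm_num
    rw [hXY, w_mul, hconj]
    exact w_congr (by omega) (by omega)
  | succ N ih =>
    intro n μ ν hμ hν hνn hsum
    have hRpos : 0 < conj n ν 0 := by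
      by_contra h
      push_neg at h
      have hz : ∀ i ∈ range n, ν i = 0 := by
        intro i hi
        rw [mem_range] at hi
        by_contra hne
        have := (lt_conj_iff hν hi).2 (by omega : 0 < ν i)
        omega
      rw [Finset.sum_eq_zero hz] at hsum
      omega
    set r := conj n ν 0 - 1 with hr
    have hrn : r < n := by
      have := conj_le n ν 0
      omega
    have hνr : 0 < ν r := (lt_conj_iff hν hrn).1 (by omega)
    have hafter : ∀ i, r < i → ν i = 0 := by
      intro i hi
      by_cases hin : i < n
      · by_contra hne
        have := (lt_conj_iff hν hin).2 (by omega : 0 < ν i)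
        omega
      · exact hνn i (by omega)
    set c := ν r - 1 with hc
    have hνrc : ν r = c + 1 := by omega
    set ν' := Function.update ν r c with hν'def
    have hν'app : ∀ i, i ≠ r → ν' i = ν i := fun i h => Function.update_of_ne h c ν
    have hν'r : ν' r = c := Function.update_self r c ν
    have hν'anti : Antitone ν' := by
      intro a b hab
      by_cases hbr : b = r
      · by_cases har : a = r
        · rw [hbr, har]
        · rw [hbr, hν'r, hν'app a har]
          have h1 : ν b ≤ ν a := hν hab
          have h2 : ν b = ν r := by rw [hbr]
          omega
      · rw [hν'app b hbr]
        by_cases har : a = r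
        · rw [hafter b (by omega), har, hν'r]
          omega
        · rw [hν'app a har]
          exact hν hab
    have hν'n : ∀ i, n ≤ i → ν' i = 0 := by
      intro i hi
      rw [hν'app i (by omega)]
      exact hνn i hi
    have hsum' : (∑ i ∈ range n, ν' i) = N := by
      have h1 : ∑ x ∈ range n, Function.update ν r c x = c + ∑ x ∈ (range n) \ {r}, ν x :=
        Finset.sum_update_of_mem (mem_range.2 hrn) ν c
      have h2 : ν r + ∑ x ∈ (range n).erase r, ν x = ∑ x ∈ range n, ν x :=
        Finset.add_sum_erase (range n) ν (mem_range.2 hrn)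
      rw [← Finset.erase_eq] at h1
      have h3 : ∑ x ∈ range n, ν' x = ∑ x ∈ range n, Function.update ν r c x := rfl
      rw [h3, h1]
      omega
    have hconjC : conj n ν c = r + 1 := by
      have le1 : r < conj n ν c := (lt_conj_iff hν hrn).2 (by omega)
      have le2 : conj n ν c ≤ r + 1 := by
        by_contra hcon
        push_neg at hcon
        have hr1n : r + 1 < n := by
          have := conj_le n ν c
          omega
        have := (lt_conj_iff hν hr1n).1 (by omega : r + 1 < conj n ν c)
        rw [hafter (r+1) (by omega)] at this
        omega
      omega
    have hconjC' : conj n ν' c = r := by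
      have le1 : conj n ν' c ≤ r := by
        by_contra hcon
        push_neg at hcon
        have := (lt_conj_iff hν'anti hrn).1 (by omega : r < conj n ν' c)
        rw [hν'r] at this
        omega
      have le2 : r ≤ conj n ν' c := by
        by_contra hcon
        push_neg at hcon
        have hin : conj n ν' c < n := by omega
        have hlt : c < ν' (conj n ν' c) := by
          rw [hν'app _ (by omega)]
          have : ν r ≤ ν (conj n ν' c) := hν (by omega)
          omega
        have := (lt_conj_iff hν'anti hin).2 hlt
        omega
      omega
    have hconjJ : ∀ j, j ≠ c → conj n ν j = conj n ν' j := by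
      intro j hj
      rw [conj, conj]
      congr 1
      apply Finset.filter_congr
      intro i _
      by_cases hir : i = r
      · subst hir
        rw [hν'r, hνrc]
        constructor <;> intro h <;> omega
      · rw [hν'app i hir]
    -- U decomposition
    have hUfs : Uf n ν = Uf n ν' + w (c:ℤ) (r:ℤ) := by
      have hdiff : ∑ i ∈ range n,
          ((∑ j ∈ range (ν i), w (j:ℤ) (i:ℤ)) - (∑ j ∈ range (ν' i), w (j:ℤ) (i:ℤ)))
          = w (c:ℤ) (r:ℤ) := by
        rw [Finset.sum_eq_single_of_mem r (mem_range.2 hrn)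
          (fun b _ hbr => by rw [hν'app b hbr]; exact sub_self _)]
        rw [hν'r, hνrc, Finset.sum_range_succ]
        ring
      have h2 : Uf n ν - Uf n ν' = w (c:ℤ) (r:ℤ) := by
        rw [Uf, Uf, ← Finset.sum_sub_distrib]
        exact hdiff
      linear_combination h2
    have ihv := ih n μ ν' hμ hν'anti hν'n hsum'
    -- difference of first sums
    have hF : (∑ i ∈ range n, ∑ j ∈ range (ν i), w ((ν i : ℤ) - j - 1) ((i:ℤ) - (conj n μ j : ℤ)))
        = (∑ i ∈ range n, ∑ j ∈ range (ν' i), w ((ν' i : ℤ) - j - 1) ((i:ℤ) - (conj n μ j : ℤ)))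
          + (w 0 ((r:ℤ) - (conj n μ c : ℤ))
            + ∑ j ∈ range c, (w ((c:ℤ) - j) ((r:ℤ) - (conj n μ j : ℤ))
              - w ((c:ℤ) - j - 1) ((r:ℤ) - (conj n μ j : ℤ)))) := by
      have hdiff : ∑ i ∈ range n,
          ((∑ j ∈ range (ν i), w ((ν i : ℤ) - j - 1) ((i:ℤ) - (conj n μ j : ℤ)))
            - (∑ j ∈ range (ν' i), w ((ν' i : ℤ) - j - 1) ((i:ℤ) - (conj n μ j : ℤ))))
          = w 0 ((r:ℤ) - (conj n μ c : ℤ))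
            + ∑ j ∈ range c, (w ((c:ℤ) - j) ((r:ℤ) - (conj n μ j : ℤ))
              - w ((c:ℤ) - j - 1) ((r:ℤ) - (conj n μ j : ℤ))) := by
        rw [Finset.sum_eq_single_of_mem r (mem_range.2 hrn)
          (fun b _ hbr => by rw [hν'app b hbr]; exact sub_self _)]
        rw [hν'r, hνrc, Finset.sum_range_succ]
        have e1 : w ((((c:ℕ)+1:ℕ):ℤ) - (c:ℤ) - 1) ((r:ℤ) - (conj n μ c : ℤ))
            = w 0 ((r:ℤ) - (conj n μ c : ℤ)) := w_congr (by push_cast; ring) rfl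
        have e2 : ∀ j ∈ range c, w ((((c:ℕ)+1:ℕ):ℤ) - (j:ℤ) - 1) ((r:ℤ) - (conj n μ j : ℤ))
            = w ((c:ℤ) - j) ((r:ℤ) - (conj n μ j : ℤ)) := by
          intro j _
          exact w_congr (by push_cast; ring) rfl
        rw [Finset.sum_congr rfl e2, e1, Finset.sum_sub_distrib]
        ring
      have h2 := hdiff
      rw [Finset.sum_sub_distrib] at h2
      linear_combination h2
    -- difference of second sums
    have hG : (∑ i ∈ range n, ∑ j ∈ range (μ i), w ((j:ℤ) - (μ i : ℤ)) ((conj n ν j : ℤ) - i - 1))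
        = (∑ i ∈ range n, ∑ j ∈ range (μ i), w ((j:ℤ) - (μ i : ℤ)) ((conj n ν' j : ℤ) - i - 1))
          + ∑ i ∈ range (conj n μ c),
              (w ((c:ℤ) - (μ i : ℤ)) ((r:ℤ) - i) - w ((c:ℤ) - (μ i : ℤ)) ((r:ℤ) - i - 1)) := by
      have hrow : ∀ i : ℕ,
          (∑ j ∈ range (μ i), w ((j:ℤ) - (μ i : ℤ)) ((conj n ν j : ℤ) - i - 1))
            - (∑ j ∈ range (μ i), w ((j:ℤ) - (μ i : ℤ)) ((conj n ν' j : ℤ) - i - 1))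
          = if c < μ i then
              (w ((c:ℤ) - (μ i : ℤ)) ((r:ℤ) - i) - w ((c:ℤ) - (μ i : ℤ)) ((r:ℤ) - i - 1))
            else 0 := by
        intro i
        rw [← Finset.sum_sub_distrib]
        have hptw : ∀ j ∈ range (μ i),
            (w ((j:ℤ) - (μ i : ℤ)) ((conj n ν j : ℤ) - i - 1)
              - w ((j:ℤ) - (μ i : ℤ)) ((conj n ν' j : ℤ) - i - 1))
            = if j = c then
                (w ((c:ℤ) - (μ i : ℤ)) ((r:ℤ) - i) - w ((c:ℤ) - (μ i : ℤ)) ((r:ℤ) - i - 1))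
              else 0 := by
          intro j _
          by_cases hjc : j = c
          · rw [if_pos hjc, hjc, hconjC, hconjC']
            have e1 : w ((c:ℤ) - (μ i : ℤ)) ((((r:ℕ)+1:ℕ):ℤ) - (i:ℤ) - 1)
                = w ((c:ℤ) - (μ i : ℤ)) ((r:ℤ) - i) := w_congr rfl (by push_cast; ring)
            rw [e1]
          · rw [if_neg hjc, hconjJ j hjc]
            exact sub_self _
        rw [Finset.sum_congr rfl hptw, Finset.sum_ite_eq' (range (μ i)) c
          (fun _ => (w ((c:ℤ) - (μ i : ℤ)) ((r:ℤ) - i) - w ((c:ℤ) - (μ i : ℤ)) ((r:ℤ) - i - 1)))]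
        simp only [mem_range]
      have hdiff : ∑ i ∈ range n,
          ((∑ j ∈ range (μ i), w ((j:ℤ) - (μ i : ℤ)) ((conj n ν j : ℤ) - i - 1))
            - (∑ j ∈ range (μ i), w ((j:ℤ) - (μ i : ℤ)) ((conj n ν' j : ℤ) - i - 1)))
          = ∑ i ∈ range (conj n μ c),
              (w ((c:ℤ) - (μ i : ℤ)) ((r:ℤ) - i) - w ((c:ℤ) - (μ i : ℤ)) ((r:ℤ) - i - 1)) := by
        rw [Finset.sum_congr rfl (fun i _ => hrow i), ← Finset.sum_filter, filter_conj hμ]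
      rw [Finset.sum_sub_distrib] at hdiff
      linear_combination hdiff
    -- the increment equals w c r * (1 - Mbar * Ubar)
    have hD : w (c:ℤ) (r:ℤ) * (1 - Mbar * Ubar n μ)
        = (w 0 ((r:ℤ) - (conj n μ c : ℤ))
            + ∑ j ∈ range c, (w ((c:ℤ) - j) ((r:ℤ) - (conj n μ j : ℤ))
              - w ((c:ℤ) - j - 1) ((r:ℤ) - (conj n μ j : ℤ))))
          + ∑ i ∈ range (conj n μ c),
              (w ((c:ℤ) - (μ i : ℤ)) ((r:ℤ) - i) - w ((c:ℤ) - (μ i : ℤ)) ((r:ℤ) - i - 1)) := by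
      have h1 : 1 - Mbar * Ubar n μ
          = w 0 (-(n:ℤ)) + ∑ i ∈ range n, (w 0 (-(i:ℤ)) - w 0 (-(i:ℤ) - 1)) * w (-(μ i : ℤ)) 0 := by
        rw [L1]
        ring
      rw [h1, L2 hμ c, mul_add, mul_add, Finset.mul_sum, Finset.mul_sum]
      congr 1
      congr 1
      · rw [w_mul]
        exact w_congr (by ring) (by ring)
      · apply Finset.sum_congr rfl
        intro j _
        have e : ∀ q : ℤ, w (c:ℤ) (r:ℤ) * ((w (-(j:ℤ)) 0 - w (-(j:ℤ) - 1) 0) * w 0 q)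
            = w ((c:ℤ) - j) ((r:ℤ) + q) - w ((c:ℤ) - j - 1) ((r:ℤ) + q) := by
          intro q
          rw [sub_mul, mul_sub, wmul3, wmul3]
          rw [w_congr (show (c:ℤ) + -(j:ℤ) = (c:ℤ) - j by ring) (rfl : (r:ℤ) + q = (r:ℤ) + q),
            w_congr (show (c:ℤ) + (-(j:ℤ) - 1) = (c:ℤ) - j - 1 by ring) (rfl : (r:ℤ) + q = (r:ℤ) + q)]
        rw [e (-(conj n μ j : ℤ))]
        rw [w_congr (rfl : (c:ℤ) - j = (c:ℤ) - j)
            (show (r:ℤ) + -(conj n μ j:ℤ) = (r:ℤ) - (conj n μ j:ℤ) by ring),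
          w_congr (rfl : (c:ℤ) - j - 1 = (c:ℤ) - j - 1)
            (show (r:ℤ) + -(conj n μ j:ℤ) = (r:ℤ) - (conj n μ j:ℤ) by ring)]
      · apply Finset.sum_congr rfl
        intro i _
        have : w (c:ℤ) (r:ℤ) * (w (-(μ i : ℤ)) 0 * (w 0 (-(i:ℤ)) - w 0 (-(i:ℤ) - 1)))
            = w (c:ℤ) (r:ℤ) * (w (-(μ i:ℤ)) 0 * w 0 (-(i:ℤ)))
              - w (c:ℤ) (r:ℤ) * (w (-(μ i:ℤ)) 0 * w 0 (-(i:ℤ) - 1)) := by ring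
        rw [this, wmul3, wmul3]
        rw [w_congr (show (c:ℤ) + -(μ i:ℤ) = (c:ℤ) - μ i by ring)
              (show (r:ℤ) + -(i:ℤ) = (r:ℤ) - i by ring),
          w_congr (show (c:ℤ) + -(μ i:ℤ) = (c:ℤ) - μ i by ring)
              (show (r:ℤ) + (-(i:ℤ) - 1) = (r:ℤ) - i - 1 by ring)]
    rw [hUfs, hF, hG]
    linear_combination ihv + hD
  
end EtangProof
namespace EtangProof
open Finset

lemma hMb_ne : Mbar ≠ 0 := by
  rw [Mbar]
  apply mul_ne_zero
  · intro h
    have hx1 : X⁻¹ = 1 := by linear_combination -h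
    rw [inv_eq_one] at hx1
    exact h1X (by rw [hx1]; ring)
  · intro h
    have hy1 : Y⁻¹ = 1 := by linear_combination -h
    rw [inv_eq_one] at hy1
    exact h1Y (by rw [hy1]; ring)

lemma Upoly_inv (n : ℕ) (μ : ℕ → ℕ) : Upoly n μ (zvar 0)⁻¹ (zvar 1)⁻¹ = Ubar n μ := by
  rw [Upoly, Ubar]
  apply Finset.sum_congr rfl
  intro i _
  apply Finset.sum_congr rfl
  intro j _
  rw [w]
  rw [show X ^ (-(j:ℤ)) = (X⁻¹) ^ j by rw [zpow_neg, zpow_natCast, inv_pow]]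
  rw [show Y ^ (-(i:ℤ)) = (Y⁻¹) ^ i by rw [zpow_neg, zpow_natCast, inv_pow]]
  rfl

lemma Upoly_pos (n : ℕ) (ν : ℕ → ℕ) : Upoly n ν (zvar 0) (zvar 1) = Uf n ν := by
  rw [Upoly, Uf]
  apply Finset.sum_congr rfl
  intro i _
  apply Finset.sum_congr rfl
  intro j _
  rw [w, zpow_natCast, zpow_natCast]
  rfl

lemma Mbar_eq : Mbar = X⁻¹ * Y⁻¹ * ((1 - X) * (1 - Y)) := by
  rw [Mbar]
  have hx := hX
  have hy := hY
  field_simp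
  ring

lemma Etang_eq (n : ℕ) (μ ν : ℕ → ℕ) :
    Etang n μ ν = X⁻¹ * Y⁻¹ * Ubar n μ + Uf n ν - Mbar * Uf n ν * Ubar n μ := by
  have hM : ((1 : RatField) - X) * (1 - Y) ≠ 0 := mul_ne_zero h1X h1Y
  have hMb := hMb_ne
  rw [Etang]
  rw [Upoly_inv, Upoly_pos]
  rw [show zvar 0 = X from rfl, show zvar 1 = Y from rfl]
  rw [show ((1 : RatField) - X⁻¹) * (1 - Y⁻¹) = Mbar from rfl]
  have expand : Mbar * (((1 - X) * (1 - Y))⁻¹ * Mbar⁻¹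
      - (((1 - X) * (1 - Y))⁻¹ - Uf n ν) * (Mbar⁻¹ - Ubar n μ))
      = (Mbar * ((1 - X) * (1 - Y))⁻¹) * Ubar n μ + (Mbar * Mbar⁻¹) * Uf n ν
        - Mbar * Uf n ν * Ubar n μ := by ring
  rw [expand, mul_inv_cancel₀ hMb, one_mul]
  have h2 : Mbar * ((1 - X) * (1 - Y))⁻¹ = X⁻¹ * Y⁻¹ := by
    rw [Mbar_eq, mul_assoc, mul_assoc, mul_inv_cancel₀ hM, mul_one]
  rw [h2]

noncomputable def fmon : (ℤ × ℤ) → ℕ → RatField :=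
  fun p m => (m : RatField) * zvar 0 ^ p.1 * zvar 1 ^ p.2

lemma fmon_zero (p : ℤ × ℤ) : fmon p 0 = 0 := by rw [fmon]; push_cast; ring

lemma fmon_add (p : ℤ × ℤ) (m m' : ℕ) : fmon p (m + m') = fmon p m + fmon p m' := by
  simp only [fmon]; push_cast; ring

noncomputable def Φ : ((ℤ × ℤ) →₀ ℕ) →+ RatField where
  toFun c := c.sum fmon
  map_zero' := Finsupp.sum_zero_index
  map_add' c d := Finsupp.sum_add_index' fmon_zero fmon_add

def gcnt : (ℤ × ℤ) → ℕ → ℕ := fun _ m => m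

noncomputable def Ψ : ((ℤ × ℤ) →₀ ℕ) →+ ℕ where
  toFun c := c.sum gcnt
  map_zero' := Finsupp.sum_zero_index
  map_add' c d := Finsupp.sum_add_index' (fun _ => rfl) (fun _ _ _ => rfl)

lemma Φ_single (p : ℤ × ℤ) : Φ (Finsupp.single p 1) = w p.1 p.2 := by
  show (Finsupp.single p 1).sum fmon = _
  rw [Finsupp.sum_single_index (fmon_zero p)]
  simp only [fmon, w, X, Y]
  push_cast
  ring

lemma Ψ_single (p : ℤ × ℤ) : Ψ (Finsupp.single p 1) = 1 := by
  show (Finsupp.single p 1).sum gcnt = 1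
  rw [Finsupp.sum_single_index rfl]
  rfl

end EtangProof

open Finset EtangProof

/-!
STATEMENT 9: E_{μ,ν} is a Laurent polynomial in z₁, z₂ with nonnegative
integer coefficients, and when μ = ν the sum of its coefficients is 2|μ|.
-/
theorem Etang_nonneg_coeffs (n : ℕ) (μ ν : ℕ → ℕ)
    (hμ : Antitone μ) (hν : Antitone ν)
    (hμn : ∀ i, n ≤ i → μ i = 0) (hνn : ∀ i, n ≤ i → ν i = 0) :
    ∃ c : (ℤ × ℤ) →₀ ℕ,
      Etang n μ ν = c.sum (fun w m => (m : RatField) * zvar 0 ^ w.1 * zvar 1 ^ w.2) ∧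
      (μ = ν → (c.sum fun _ m => m) = 2 * ∑ i ∈ Finset.range n, μ i) := by
  classical
  open EtangProof in
  refine ⟨(∑ i ∈ range n, ∑ j ∈ range (ν i),
      Finsupp.single (((ν i : ℤ) - j - 1), ((i:ℤ) - (conj n μ j : ℤ))) 1)
    + (∑ i ∈ range n, ∑ j ∈ range (μ i),
      Finsupp.single (((j:ℤ) - (μ i : ℤ)), ((conj n ν j : ℤ) - i - 1)) 1), ?_, ?_⟩
  · show Etang n μ ν = Φ _
    rw [map_add, map_sum, map_sum]
    have e1 : ∀ i ∈ range n, (Φ (∑ j ∈ range (ν i),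
        Finsupp.single (((ν i : ℤ) - j - 1), ((i:ℤ) - (conj n μ j : ℤ))) 1))
        = ∑ j ∈ range (ν i), w ((ν i : ℤ) - j - 1) ((i:ℤ) - (conj n μ j : ℤ)) := by
      intro i _
      rw [map_sum]
      exact Finset.sum_congr rfl (fun j _ => Φ_single _)
    have e2 : ∀ i ∈ range n, (Φ (∑ j ∈ range (μ i),
        Finsupp.single (((j:ℤ) - (μ i : ℤ)), ((conj n ν j : ℤ) - i - 1)) 1))
        = ∑ j ∈ range (μ i), w ((j:ℤ) - (μ i : ℤ)) ((conj n ν j : ℤ) - i - 1) := by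
      intro i _
      rw [map_sum]
      exact Finset.sum_congr rfl (fun j _ => Φ_single _)
    rw [Finset.sum_congr rfl e1, Finset.sum_congr rfl e2]
    rw [Etang_eq]
    exact key (∑ i ∈ range n, ν i) n μ ν hμ hν hνn rfl
  · intro hμν
    subst hμν
    show Ψ _ = _
    rw [map_add, map_sum, map_sum]
    have e1 : ∀ (f : ℕ → ℕ → ℤ × ℤ) (i : ℕ), i ∈ range n →
        (Ψ (∑ j ∈ range (μ i), Finsupp.single (f i j) 1)) = μ i := by
      intro f i _
      rw [map_sum]
      rw [Finset.sum_congr rfl (fun j _ => Ψ_single (f i j))]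
      rw [Finset.sum_const, card_range, smul_eq_mul, mul_one]
    rw [Finset.sum_congr rfl (e1 (fun i j => (((μ i : ℤ) - j - 1), ((i:ℤ) - (conj n μ j : ℤ))))),
      Finset.sum_congr rfl (e1 (fun i j => (((j:ℤ) - (μ i : ℤ)), ((conj n μ j : ℤ) - i - 1))))]
    ring
end

section
/- For any f, g ∈ Λ and any expression h (a rational function in auxiliary variables with |values| arranged for convergence), Tr(φ_{(1−h^{−1})p_1} m_f^* m_g) = ∑_μ (φ_{1−h^{−1}}(p_μ)/𝔷(μ)) · (f p_μ, g p_μ), where the trace is over Λ in the orthonormal Schur basis, m_g is multiplication by g, and m_f^* is its Hall adjoint. -/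
open MvPolynomial

/-- 𝔷 of the exponent vector d: ∏_k (k+1)^{d_k} d_k!. -/
noncomputable def zfactorC (d : ℕ →₀ ℕ) : ℂ :=
  d.prod fun k e => ((k : ℂ) + 1) ^ e * (e.factorial : ℂ)

/-- The Hall inner product: (p_μ, p_ν) = δ_{μν} 𝔷(μ). -/
noncomputable def hall (P Q : SymFun) : ℂ :=
  ∑ d ∈ P.support ∪ Q.support, P.coeff d * Q.coeff d * zfactorC d

/-- The monomial p_μ, for the exponent vector d. -/
noncomputable def pMon (d : ℕ →₀ ℕ) : SymFun := monomial d 1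

/-- The diagonal homomorphism φ_{(1−h⁻¹)p₁} : p_k ↦ (1 − (h⁻¹)_k)·p_k, where
`h k` encodes the plethystic value h_{k+1}. -/
noncomputable def phiDiag (h : ℕ → ℂ) : SymFun →ₐ[ℂ] SymFun :=
  aeval fun k => C (1 - (h k)⁻¹) * X k

/-!
STATEMENT 16:
Tr(φ_{(1−h⁻¹)p₁} ∘ m_f^* ∘ m_g) = ∑_μ (φ_{1−h⁻¹}(p_μ)/𝔷(μ))·(f p_μ, g p_μ),
where the trace over Λ is taken in an orthogonal basis
(Tr A = ∑_μ (A p_μ, p_μ)/𝔷(μ), which agrees with the trace in the orthonormal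
Schur basis), m_g is multiplication by g and m_f^* is the Hall adjoint of
multiplication by f.
-/

lemma hall_comm (P Q : SymFun) : hall P Q = hall Q P := by
  unfold hall
  rw [Finset.union_comm]
  exact Finset.sum_congr rfl fun d _ => by ring

lemma hall_pMon (P : SymFun) (d : ℕ →₀ ℕ) :
    hall P (pMon d) = P.coeff d * zfactorC d := by
  unfold hall pMon
  rw [Finset.sum_eq_single d]
  · simp
  · intro b _ hb
    simp [coeff_monomial, Ne.symm hb]
  · intro hd
    simp only [Finset.mem_union, not_or, MvPolynomial.mem_support_iff, not_not] at hd
    simp [hd.1]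

lemma phiDiag_monomial (h : ℕ → ℂ) (d : ℕ →₀ ℕ) (c : ℂ) :
    phiDiag h (monomial d c) =
      monomial d ((d.prod fun k e => (1 - (h k)⁻¹) ^ e) * c) := by
  rw [phiDiag, aeval_monomial, monomial_eq]
  simp only [mul_pow, ← C_pow, Finsupp.prod, Finset.prod_mul_distrib, ← map_prod]
  simp only [algebraMap_eq, map_mul]
  ring

lemma phiDiag_coeff (h : ℕ → ℂ) (P : SymFun) (d : ℕ →₀ ℕ) :
    (phiDiag h P).coeff d = (d.prod fun k e => (1 - (h k)⁻¹) ^ e) * P.coeff d := by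
  conv_lhs => rw [P.as_sum]
  rw [map_sum, coeff_sum]
  simp only [phiDiag_monomial]
  rw [Finset.sum_eq_single d]
  · simp
  · intro b _ hb; rw [coeff_monomial, if_neg hb]
  · intro hd; simp only [MvPolynomial.mem_support_iff, not_not] at hd; simp [hd]

theorem trace_diag_formula (h : ℕ → ℂ) (f g : SymFun)
    (Fstar : SymFun →ₗ[ℂ] SymFun)
    (hFstar : ∀ u v : SymFun, hall (Fstar u) v = hall u (f * v))
    (hs1 : Summable fun d : ℕ →₀ ℕ =>
      (zfactorC d)⁻¹ * hall (phiDiag h (Fstar (g * pMon d))) (pMon d))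
    (hs2 : Summable fun d : ℕ →₀ ℕ =>
      ((d.prod fun k e => (1 - (h k)⁻¹) ^ e) / zfactorC d) *
        hall (f * pMon d) (g * pMon d)) :
    ∑' d : ℕ →₀ ℕ,
        (zfactorC d)⁻¹ * hall (phiDiag h (Fstar (g * pMon d))) (pMon d) =
      ∑' d : ℕ →₀ ℕ,
        ((d.prod fun k e => (1 - (h k)⁻¹) ^ e) / zfactorC d) *
          hall (f * pMon d) (g * pMon d) := by
  refine tsum_congr fun d => ?_
  have h1 : hall (f * pMon d) (g * pMon d) =
      (Fstar (g * pMon d)).coeff d * zfactorC d := by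
    rw [hall_comm, ← hFstar, hall_pMon]
  rw [hall_pMon, phiDiag_coeff, h1, div_eq_mul_inv]
  ring
end
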